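/- A positive integer n is the order of some finite group generated by two elements whose commutator has order 2 if and only if n is divisible by 8 or by 12. (For the 'only if' direction one may assume the fact that every finite group whose order is not divisible by 8 or 12 is solvable.) -/

import Mathlib

/-!
If `8 ∤ |G|` and `12 ∤ |G|`, a Sylow `2`-subgroup `P` of `G` has order `1`, `2` or `4`, so it is
abelian and `|Aut P|` divides `(|P| - 1)!`, which is coprime to the odd index of `P` (and
`3 ∤ [G : P]` when `|P| = 4`). Hence `N(P) = C(P)`, and Burnside's transfer `G → P` has a kernel
of odd order containing every commutator: no commutator has order `2`.

Conversely, `N ⋊ ℤ/k`, with the generator `c` of `ℤ/k` acting by an automorphism `σ`, is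
generated by `x ∈ N` and `c` as soon as `x` and `σ x` generate `N`, and `⁅x, c⁆ = x (σ x)⁻¹`.
Take `N = ℤ/4m`, `σ` the multiplication by `2m + 1`, `k = 2` and `x = 1` (commutator `-2m`), or
`N = (ℤ/2)²`, `σ` of order `3`, `k = 3m`.
-/

open scoped commutatorElement

/-- A witness that `n` is tH: a finite group of order `n` generated by two elements
whose commutator has order 2. -/
structure THWitness (n : ℕ) where
  G : Type
  [grp : Group G]
  [fin : Finite G]
  card_eq : Nat.card G = n
  a : G
  b : G
  gen : Subgroup.closure ({a, b} : Set G) = ⊤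
  comm_order : orderOf ⁅a, b⁆ = 2

open Nat in
theorem Nat.card_mulAut_dvd_factorial (P : Type*) [Group P] [Finite P] :
    Nat.card (MulAut P) ∣ (Nat.card P - 1)! := by
  classical
  have : Fintype P := Fintype.ofFinite P
  let f : MulAut P →* Equiv.Perm {x : P // x ≠ 1} :=
    { toFun := fun σ => Equiv.Perm.subtypePerm σ.toEquiv fun x => by simp
      map_one' := rfl
      map_mul' := fun _ _ => rfl }
  have hf : Function.Injective f := by
    intro σ τ h
    ext x
    by_cases hx : x = 1
    · simp [hx]
    · exact congrArg Subtype.val (Equiv.ext_iff.mp h ⟨x, hx⟩)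
  simpa [Nat.card_eq_fintype_card, Fintype.card_perm, Fintype.card_subtype_compl]
    using Subgroup.card_dvd_of_injective f hf

theorem isMulCommutative_of_card_dvd_prime_sq {G : Type*} [Group G] {p : ℕ} [hp : Fact p.Prime]
    (hG : Nat.card G ∣ p ^ 2) : IsMulCommutative G := by
  obtain ⟨i, hi, hcard⟩ := (Nat.dvd_prime_pow hp.out).mp hG
  rcases hi.lt_or_eq with hi | rfl
  · have : IsCyclic G := isCyclic_of_card_dvd_prime (p := p) <| by
      simpa [hcard] using pow_dvd_pow p (Nat.lt_succ_iff.mp hi)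
    infer_instance
  · exact IsPGroup.isMulCommutative_of_card_eq_prime_sq hcard

theorem Subgroup.normalizer_le_centralizer_of_coprime {G : Type*} [Group G] (H : Subgroup G)
    [IsMulCommutative H] (hH : H.index.Coprime (Nat.card (MulAut H))) :
    normalizer (H : Set G) ≤ centralizer H := by
  have key := card_dvd_of_injective _ (QuotientGroup.kerLift_injective H.normalizerMonoidHom)
  rw [normalizerMonoidHom_ker, ← index, ← relIndex] at key
  refine relIndex_eq_one.mp (Nat.eq_one_of_dvd_coprimes hH ?_ key)
  exact (relIndex_dvd_of_le_left _ H.le_centralizer).trans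
    (relIndex_dvd_index_of_le le_normalizer)

theorem Sylow.not_dvd_orderOf_commutatorElement {G : Type*} [Group G] [Finite G] {p : ℕ}
    [Fact p.Prime] (P : Sylow p G) (hP : Subgroup.normalizer (P : Set G) ≤ Subgroup.centralizer P)
    (a b : G) : ¬ p ∣ orderOf ⁅a, b⁆ := by
  have hPcomm : ∀ y z : P, y * z = z * y := fun y z =>
    Subtype.ext (hP (Subgroup.le_normalizer z.2) y y.2)
  have hker : ⁅a, b⁆ ∈ (MonoidHom.transferSylow P hP).ker := by
    rw [MonoidHom.mem_ker, map_commutatorElement, commutatorElement_eq_one_iff_mul_comm]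
    exact hPcomm _ _
  exact fun h => MonoidHom.not_dvd_card_ker_transferSylow P hP
    (h.trans (Subgroup.orderOf_dvd_natCard _ hker))

theorem orderOf_commutatorElement_ne_two {G : Type*} [Group G] [Finite G]
    (h8 : ¬ 8 ∣ Nat.card G) (h12 : ¬ 12 ∣ Nat.card G) (a b : G) : orderOf ⁅a, b⁆ ≠ 2 := by
  have : Fact (Nat.Prime 2) := ⟨Nat.prime_two⟩
  let P : Sylow 2 G := default
  obtain ⟨k, hk⟩ := P.2.exists_card_eq
  have hk2 : k ≤ 2 := not_lt.mp fun h =>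
    h8 ((pow_dvd_pow 2 h).trans (hk ▸ P.1.card_subgroup_dvd_card))
  have : IsMulCommutative P := isMulCommutative_of_card_dvd_prime_sq (hk ▸ pow_dvd_pow 2 hk2)
  have hcop : (P : Subgroup G).index.Coprime (Nat.card (MulAut P)) := by
    refine Nat.Coprime.coprime_dvd_right (Nat.card_mulAut_dvd_factorial P) ?_
    have h2 : ¬ 2 ∣ (P : Subgroup G).index := P.not_dvd_index
    rw [hk]
    interval_cases k
    · simp
    · simp
    · have h3 : ¬ 3 ∣ (P : Subgroup G).index := fun h => h12 <| by
        rw [← P.1.card_mul_index, hk, show 12 = 2 ^ 2 * 3 by rfl]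
        exact mul_dvd_mul_left _ h
      show Nat.Coprime _ (2 * 3)
      exact (Nat.prime_two.coprime_iff_not_dvd.mpr h2).symm.mul_right
        (Nat.prime_three.coprime_iff_not_dvd.mpr h3).symm
  exact fun h => P.not_dvd_orderOf_commutatorElement
    ((P : Subgroup G).normalizer_le_centralizer_of_coprime hcop) a b (h ▸ dvd_rfl)

def zmodPowersHom {G : Type*} [Group G] {k : ℕ} [NeZero k] (g : G) (hg : g ^ k = 1) :
    Multiplicative (ZMod k) →* G where
  toFun x := g ^ x.toAdd.val
  map_one' := by simp
  map_mul' x y := by simp only [toAdd_mul, ZMod.val_add, ← pow_eq_pow_mod _ hg, pow_add]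

theorem zmodPowersHom_ofAdd_one {G : Type*} [Group G] {k : ℕ} [NeZero k] (g : G)
    (hg : g ^ k = 1) : zmodPowersHom g hg (Multiplicative.ofAdd 1) = g := by
  simp [zmodPowersHom, ZMod.val_one_eq_one_mod, ← pow_eq_pow_mod _ hg]

theorem ZMod.zpowers_ofAdd_one (k : ℕ) [NeZero k] :
    Subgroup.zpowers (Multiplicative.ofAdd (1 : ZMod k)) = ⊤ := by
  refine eq_top_iff.mpr fun x _ => ⟨x.toAdd.val, ?_⟩
  simp [← ofAdd_zsmul]

namespace SemidirectProduct

variable {N C : Type*} [Group N] [Group C] {φ : C →* MulAut N}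

theorem commutatorElement_inl_inr (x : N) (c : C) :
    ⁅(inl x : N ⋊[φ] C), (inr c : N ⋊[φ] C)⁆ = inl (x * (φ c x)⁻¹) := by
  rw [commutatorElement_def, map_mul, ← map_inv (φ c), inl_aut]
  simp only [map_inv, mul_assoc]

theorem closure_inl_inr_eq_top {x : N} {c : C}
    (hx : Subgroup.closure {x, φ c x} = ⊤) (hc : Subgroup.zpowers c = ⊤) :
    Subgroup.closure {(inl x : N ⋊[φ] C), inr c} = ⊤ := by
  set K := Subgroup.closure {(inl x : N ⋊[φ] C), inr c}
  have hxK : inl x ∈ K := Subgroup.subset_closure (Set.mem_insert _ _)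
  have hcK : inr c ∈ K := Subgroup.subset_closure (Set.mem_insert_of_mem _ rfl)
  have hN : K.comap inl = ⊤ := by
    rw [eq_top_iff, ← hx, Subgroup.closure_le]
    rintro _ (rfl | rfl)
    · exact hxK
    · show inl (φ c x) ∈ K
      rw [inl_aut, map_inv]
      exact mul_mem (mul_mem hcK hxK) (inv_mem hcK)
  have hC : K.comap inr = ⊤ := by
    rw [eq_top_iff, ← hc, Subgroup.zpowers_le]
    exact hcK
  refine eq_top_iff.mpr fun y _ => inl_left_mul_inr_right y ▸ mul_mem ?_ ?_
  · exact Subgroup.mem_comap.mp (hN ▸ Subgroup.mem_top y.left)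
  · exact Subgroup.mem_comap.mp (hC ▸ Subgroup.mem_top y.right)

end SemidirectProduct

open SemidirectProduct in
theorem THWitness.nonempty_of_mulAut {N : Type} [Group N] [Finite N] {n k : ℕ} [NeZero k]
    (hn : Nat.card N * k = n) (σ : MulAut N) (hσ : σ ^ k = 1) (x : N)
    (hx : Subgroup.closure {x, σ x} = ⊤) (hord : orderOf (x * (σ x)⁻¹) = 2) :
    Nonempty (THWitness n) := by
  let G := N ⋊[zmodPowersHom σ hσ] Multiplicative (ZMod k)
  have : Finite G := Finite.of_equiv _ equivProd.symm
  have hσ1 := zmodPowersHom_ofAdd_one σ hσ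
  refine ⟨⟨G, ?_, inl x, inr (.ofAdd 1), ?_, ?_⟩⟩
  · simp [G, SemidirectProduct.card, ← hn]
  · exact closure_inl_inr_eq_top (by rwa [hσ1]) (ZMod.zpowers_ofAdd_one k)
  · rw [commutatorElement_inl_inr, hσ1, orderOf_injective inl inl_injective, hord]

theorem THWitness.nonempty_eight_mul {m : ℕ} (hm : m ≠ 0) : Nonempty (THWitness (8 * m)) := by
  have : NeZero (4 * m) := ⟨by omega⟩
  have h4 : (4 * m : ZMod (4 * m)) = 0 := by exact_mod_cast ZMod.natCast_self (4 * m)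
  have hu : (2 * m + 1 : ZMod (4 * m)) * (2 * m + 1) = 1 := by
    linear_combination (m + 1 : ZMod (4 * m)) * h4
  let u : (ZMod (4 * m))ˣ := Units.mkOfMulEqOne _ _ hu
  let σ : MulAut (Multiplicative (ZMod (4 * m))) :=
    (MulAutMultiplicative _).symm (AddAut.mulLeft u)
  have hσ : σ ^ 2 = 1 := by
    rw [← map_pow, ← map_pow, sq, show u * u = 1 from Units.ext hu, map_one, map_one]
  have hσx : σ (.ofAdd 1) = .ofAdd (2 * m + 1) :=
    congrArg Multiplicative.ofAdd (mul_one (2 * m + 1 : ZMod (4 * m)))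
  refine nonempty_of_mulAut (k := 2) (by simp [Nat.card_eq_fintype_card]; ring) σ hσ
    (.ofAdd 1) ?_ ?_
  · rw [eq_top_iff, ← ZMod.zpowers_ofAdd_one (4 * m), Subgroup.zpowers_eq_closure]
    exact Subgroup.closure_mono (Set.singleton_subset_iff.mpr (Set.mem_insert _ _))
  · have hc : (1 : ZMod (4 * m)) + -(2 * m + 1) = ((2 * m : ℕ) : ZMod (4 * m)) := by
      push_cast
      linear_combination -h4
    rw [hσx, ← ofAdd_neg, ← ofAdd_add, orderOf_ofAdd_eq_addOrderOf, hc,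
      ZMod.addOrderOf_coe _ (by omega), show 4 * m = 2 * (2 * m) by ring, Nat.gcd_mul_left_left,
      Nat.mul_div_cancel _ (by omega)]

theorem THWitness.nonempty_twelve_mul {m : ℕ} (hm : m ≠ 0) : Nonempty (THWitness (12 * m)) := by
  have : NeZero (3 * m) := ⟨by omega⟩
  let τ : (ZMod 2 × ZMod 2) ≃+ (ZMod 2 × ZMod 2) :=
    { toFun := fun p => (p.2, p.1 + p.2)
      invFun := fun p => (p.1 + p.2, p.1)
      left_inv := by decide
      right_inv := by decide
      map_add' := by decide }
  let σ : MulAut (Multiplicative (ZMod 2 × ZMod 2)) := AddEquiv.toMultiplicative τ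
  have hσ : σ ^ 3 = 1 := MulEquiv.ext <| by decide
  let x : Multiplicative (ZMod 2 × ZMod 2) := .ofAdd (1, 0)
  refine nonempty_of_mulAut (k := 3 * m) (by simp [Nat.card_eq_fintype_card]; ring) σ
    (by rw [pow_mul, hσ, one_pow]) x ?_ (orderOf_eq_prime (by decide) (by decide))
  have hx : ∀ w, w = x ^ w.toAdd.1.val * σ x ^ w.toAdd.2.val := by decide
  refine eq_top_iff.mpr fun w _ => hx w ▸ mul_mem (pow_mem ?_ _) (pow_mem ?_ _)
  · exact Subgroup.subset_closure (Set.mem_insert _ _)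
  · exact Subgroup.subset_closure (Set.mem_insert_of_mem _ rfl)

theorem stmt_17_general
    (n : ℕ) (hn : 0 < n) :
    Nonempty (THWitness n) ↔ 8 ∣ n ∨ 12 ∣ n := by
  constructor
  · rintro ⟨⟨G, hcard, a, b, -, hord⟩⟩
    by_contra! h
    exact orderOf_commutatorElement_ne_two (hcard ▸ h.1) (hcard ▸ h.2) a b hord
  · rintro (⟨m, rfl⟩ | ⟨m, rfl⟩)
    · exact THWitness.nonempty_eight_mul (by omega)
    · exact THWitness.nonempty_twelve_mul (by omega)

/-- A positive integer `n` is the order of a finite group generated by two elements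
whose commutator has order 2 if and only if `8 ∣ n` or `12 ∣ n`.  (The solvability of
finite groups of order not divisible by 8 or 12, which follows from Thompson's
classification of minimal finite simple groups, is taken as a hypothesis.) -/
theorem stmt_17
    (hsolv : ∀ (H : Type) [Group H] [Finite H],
      ¬ 8 ∣ Nat.card H → ¬ 12 ∣ Nat.card H → IsSolvable H)
    (n : ℕ) (hn : 0 < n) :
    Nonempty (THWitness n) ↔ 8 ∣ n ∨ 12 ∣ n :=
  stmt_17_general n hn
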